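/- arXiv:1802.07534 — 5 statements merged into one kernel-verified Lean document; each statement's English description precedes it below -/
import Mathlib

section
/- More generally, let A, B be maximal monotone on ℝ^d, α, β > 0, θ ≠ 0, and define for z ∈ ℝ^d: x₁ = J_{αA}(z), x₂ = J_{βB}((1 + β/α)x₁ − (β/α)z), T(z) = z + θ(x₂ − x₁). Then T(z*) = z* holds for some z* if and only if zer(A+B) ≠ ∅; moreover, at any fixed point z*, the common value x₁ = x₂ lies in zer(A+B). -/
open RealInnerProductSpace Pointwise Filter

/-- A set-valued operator on `ℝ^d` is monotone. -/
def MonotoneOp {d : ℕ} (A : EuclideanSpace ℝ (Fin d) → Set (EuclideanSpace ℝ (Fin d))) : Prop :=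
  ∀ x y u v, u ∈ A x → v ∈ A y → 0 ≤ ⟪u - v, x - y⟫

/-- A set-valued operator on `ℝ^d` is maximal monotone. -/
def MaximalMonotone {d : ℕ} (A : EuclideanSpace ℝ (Fin d) → Set (EuclideanSpace ℝ (Fin d))) : Prop :=
  MonotoneOp A ∧ ∀ B, MonotoneOp B → (∀ x, A x ⊆ B x) → A = B

/-- `J` is the resolvent `(I + αA)⁻¹` of `A`: for every `z`, `z ∈ (I + αA)(J z)`. -/
def IsResolvent {d : ℕ} (α : ℝ) (A : EuclideanSpace ℝ (Fin d) → Set (EuclideanSpace ℝ (Fin d)))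
    (J : EuclideanSpace ℝ (Fin d) → EuclideanSpace ℝ (Fin d)) : Prop :=
  ∀ z, α⁻¹ • (z - J z) ∈ A (J z)

/-
At a fixed point `z` of `T` the two resolvent outputs coincide, `x = J_{αA} z = J_{βB} w` with
`w = (1 + β/α) x - (β/α) z`.  The resolvent inclusions then give `u = α⁻¹ (z - x) ∈ A x` and
`β⁻¹ (w - x) = -u ∈ B x`, so `0 ∈ A x + B x`.  Conversely, if `u ∈ A x` and `-u ∈ B x`, then
`z = x + α u` is fixed: by monotonicity a resolvent is determined by any single inclusion, so
`J_{αA} z = x`, and `w = x + β (-u)` gives `J_{βB} w = x`.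
-/

lemma MonotoneOp.resolvent_apply_eq {d : ℕ} {α : ℝ} (hα : 0 < α)
    {A : EuclideanSpace ℝ (Fin d) → Set (EuclideanSpace ℝ (Fin d))} (hA : MonotoneOp A)
    {J : EuclideanSpace ℝ (Fin d) → EuclideanSpace ℝ (Fin d)} (hJ : IsResolvent α A J)
    {x u : EuclideanSpace ℝ (Fin d)} (hu : u ∈ A x) :
    J (x + α • u) = x := by
  set y := J (x + α • u)
  have hmono := hA y x _ u (hJ (x + α • u)) hu
  have hdiff : α⁻¹ • (x + α • u - y) - u = -(α⁻¹ • (y - x)) := by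
    match_scalars <;> field_simp
    ring
  rw [hdiff, inner_neg_left, real_inner_smul_left, real_inner_self_eq_norm_sq] at hmono
  have hnorm : ‖y - x‖ ^ 2 = 0 :=
    le_antisymm (by nlinarith [inv_pos.mpr hα]) (sq_nonneg _)
  simpa [sub_eq_zero] using hnorm

lemma add_smul_sub_eq_self_iff {K V : Type*} [Field K] [AddCommGroup V] [Module K V] {θ : K}
    (hθ : θ ≠ 0) {z x y : V} : z + θ • (y - x) = z ↔ x = y := by
  rw [add_eq_left, smul_eq_zero, sub_eq_zero, or_iff_right hθ, eq_comm]

lemma smul_reflect_sub_eq {K V : Type*} [Field K] [AddCommGroup V] [Module K V] {α β : K}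
    (hα : α ≠ 0) (hβ : β ≠ 0) (x z : V) :
    β⁻¹ • ((1 + β / α) • x - (β / α) • z - x) = -(α⁻¹ • (z - x)) := by
  match_scalars <;> field_simp
  ring

lemma reflect_add_smul_eq {K V : Type*} [Field K] [AddCommGroup V] [Module K V] {α : K}
    (hα : α ≠ 0) (β : K) (x u : V) :
    (1 + β / α) • x - (β / α) • (x + α • u) = x + β • -u := by
  match_scalars <;> field_simp
  ring

theorem general_two_param_splitting_encoding {d : ℕ}
    (A B : EuclideanSpace ℝ (Fin d) → Set (EuclideanSpace ℝ (Fin d)))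
    (hA : MaximalMonotone A) (hB : MaximalMonotone B)
    (α β θ : ℝ) (hα : 0 < α) (hβ : 0 < β) (hθ : θ ≠ 0)
    (JA JB : EuclideanSpace ℝ (Fin d) → EuclideanSpace ℝ (Fin d))
    (hJA : IsResolvent α A JA) (hJB : IsResolvent β B JB) :
    ((∃ z : EuclideanSpace ℝ (Fin d),
        z + θ • (JB ((1 + β / α) • JA z - (β / α) • z) - JA z) = z) ↔
      (∃ x : EuclideanSpace ℝ (Fin d), 0 ∈ A x + B x)) ∧
    (∀ z : EuclideanSpace ℝ (Fin d),
      z + θ • (JB ((1 + β / α) • JA z - (β / α) • z) - JA z) = z →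
        JA z = JB ((1 + β / α) • JA z - (β / α) • z) ∧ 0 ∈ A (JA z) + B (JA z)) := by
  have fixed_point_spec : ∀ z : EuclideanSpace ℝ (Fin d),
      z + θ • (JB ((1 + β / α) • JA z - (β / α) • z) - JA z) = z →
        JA z = JB ((1 + β / α) • JA z - (β / α) • z) ∧ 0 ∈ A (JA z) + B (JA z) := by
    intro z hz
    have heq := (add_smul_sub_eq_self_iff hθ).mp hz
    have hv := hJB ((1 + β / α) • JA z - (β / α) • z)
    rw [← heq, smul_reflect_sub_eq hα.ne' hβ.ne'] at hv
    exact ⟨heq, Set.mem_add.mpr ⟨_, hJA z, _, hv, add_neg_cancel _⟩⟩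
  refine ⟨⟨fun ⟨z, hz⟩ => ⟨JA z, (fixed_point_spec z hz).2⟩, ?_⟩, fixed_point_spec⟩
  rintro ⟨x, u, hu, v, hv, huv⟩
  obtain rfl : v = -u := eq_neg_of_add_eq_zero_right huv
  have hJAz := hA.1.resolvent_apply_eq hα hJA hu
  have hJBw := hB.1.resolvent_apply_eq hβ hJB hv
  rw [← reflect_add_smul_eq hα.ne' β] at hJBw
  refine ⟨x + α • u, (add_smul_sub_eq_self_iff hθ).mpr ?_⟩
  rw [hJAz, hJBw]
end

section
/- Let A, B, C be maximal monotone operators on ℝ^d and α > 0. Define for z = (z₁, z₂) ∈ ℝ^{2d}: x₁ = J_{αA}(z₁), x₂ = J_{αB}(x₁ + z₂), x₃ = J_{αC}(x₁ − z₁ + x₂ − z₂), T₁(z) = z₁ + θ(x₃ − x₁), T₂(z) = z₂ + θ(x₃ − x₂), with θ ≠ 0. If T(z*) = z* for z* = (z₁*, z₂*), then x₁ = x₂ = x₃ and this common point lies in zer(A + B + C). -/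
open RealInnerProductSpace Pointwise Filter

theorem three_op_fixed_point_encodes_solution {d : ℕ}
    (A B C : EuclideanSpace ℝ (Fin d) → Set (EuclideanSpace ℝ (Fin d)))
    (hA : MaximalMonotone A) (hB : MaximalMonotone B) (hC : MaximalMonotone C)
    (α θ : ℝ) (hα : 0 < α) (hθ : θ ≠ 0)
    (JA JB JC : EuclideanSpace ℝ (Fin d) → EuclideanSpace ℝ (Fin d))
    (hJA : IsResolvent α A JA) (hJB : IsResolvent α B JB) (hJC : IsResolvent α C JC)
    (z₁ z₂ : EuclideanSpace ℝ (Fin d))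
    (hfix₁ : z₁ + θ • (JC (JA z₁ - z₁ + JB (JA z₁ + z₂) - z₂) - JA z₁) = z₁)
    (hfix₂ : z₂ + θ • (JC (JA z₁ - z₁ + JB (JA z₁ + z₂) - z₂) - JB (JA z₁ + z₂)) = z₂) :
    JA z₁ = JB (JA z₁ + z₂) ∧
    JB (JA z₁ + z₂) = JC (JA z₁ - z₁ + JB (JA z₁ + z₂) - z₂) ∧
    0 ∈ A (JA z₁) + B (JA z₁) + C (JA z₁) := by
  set x₁ := JA z₁ with hx₁
  set x₂ := JB (JA z₁ + z₂) with hx₂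
  set x₃ := JC (JA z₁ - z₁ + JB (JA z₁ + z₂) - z₂) with hx₃
  have h31 : x₃ = x₁ := by
    have := hfix₁
    have h : θ • (x₃ - x₁) = 0 := by linear_combination (norm := module) this
    have := smul_eq_zero.mp h
    rcases this with h | h
    · exact absurd h hθ
    · linear_combination (norm := module) h
  have h32 : x₃ = x₂ := by
    have := hfix₂
    have h : θ • (x₃ - x₂) = 0 := by linear_combination (norm := module) this
    rcases smul_eq_zero.mp h with h | h
    · exact absurd h hθ
    · linear_combination (norm := module) h
  refine ⟨by rw [← h31, ← h32], h32.symm, ?_⟩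
  have hA' : α⁻¹ • (z₁ - x₁) ∈ A x₁ := hJA z₁
  have hB' : α⁻¹ • (x₁ + z₂ - x₂) ∈ B x₂ := hJB (JA z₁ + z₂)
  have hC' : α⁻¹ • (x₁ - z₁ + x₂ - z₂ - x₃) ∈ C x₃ := hJC _
  have h21 : x₂ = x₁ := h32.symm.trans h31
  rw [h21] at hB'
  rw [h31, h21] at hC'
  have heq : α⁻¹ • (z₁ - x₁) + α⁻¹ • (x₁ + z₂ - x₁) + α⁻¹ • (x₁ - z₁ + x₁ - z₂ - x₁) = 0 := by
    module
  rw [← heq]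
  exact Set.add_mem_add (Set.add_mem_add hA' hB') hC'
end

section
/- Let A, B, C be maximal monotone operators on ℝ^d with x* ∈ zer(A+B+C), and let α > 0. Let a ∈ A x*, b ∈ B x*, c ∈ C x* with a + b + c = 0. Then z* = (x* + αa, αb) is a fixed point of the map T of Theorem 4, i.e., with x₁ = J_{αA}(z₁*), x₂ = J_{αB}(x₁ + z₂*), x₃ = J_{αC}(x₁ − z₁* + x₂ − z₂*), one has x₁ = x₂ = x₃ = x* and T(z*) = z*. -/
open RealInnerProductSpace Pointwise Filter

lemma resolvent_eq {d : ℕ} {α : ℝ} (hα : 0 < α)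
    {A : EuclideanSpace ℝ (Fin d) → Set (EuclideanSpace ℝ (Fin d))}
    (hM : ∀ x y u v, u ∈ A x → v ∈ A y → 0 ≤ ⟪u - v, x - y⟫)
    {J : EuclideanSpace ℝ (Fin d) → EuclideanSpace ℝ (Fin d)}
    (hJ : ∀ z, α⁻¹ • (z - J z) ∈ A (J z))
    {p w : EuclideanSpace ℝ (Fin d)} (hw : w ∈ A p) :
    J (p + α • w) = p := by
  set z := p + α • w with hz
  have hv := hJ z
  have h := hM p (J z) w _ hw hv
  have hd : p - J z = α • (α⁻¹ • (z - J z) - w) := by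
    rw [smul_sub, smul_smul, mul_inv_cancel₀ hα.ne', one_smul, hz]
    abel
  rw [hd, real_inner_smul_right] at h
  have h2 : ⟪w - α⁻¹ • (z - J z), α⁻¹ • (z - J z) - w⟫ =
      -‖α⁻¹ • (z - J z) - w‖^2 := by
    rw [show w - α⁻¹ • (z - J z) = -(α⁻¹ • (z - J z) - w) by abel,
      inner_neg_left, real_inner_self_eq_norm_sq]
  rw [h2] at h
  have : ‖α⁻¹ • (z - J z) - w‖^2 ≤ 0 := by nlinarith
  have hzero : α⁻¹ • (z - J z) - w = 0 := by
    have := sq_nonneg ‖α⁻¹ • (z - J z) - w‖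
    have : ‖α⁻¹ • (z - J z) - w‖ = 0 := by nlinarith [norm_nonneg (α⁻¹ • (z - J z) - w)]
    exact norm_eq_zero.mp this
  have : α⁻¹ • (z - J z) = w := by linear_combination (norm := abel) hzero
  have : z - J z = α • w := by
    rw [← this, smul_smul, mul_inv_cancel₀ hα.ne', one_smul]
  have := sub_eq_iff_eq_add.mp this
  rw [hz] at this
  have : J z = p := by
    have := this
    rw [eq_comm, add_comm] at this
    exact (add_right_cancel this)
  exact this

theorem three_op_solution_gives_fixed_point {d : ℕ}
    (A B C : EuclideanSpace ℝ (Fin d) → Set (EuclideanSpace ℝ (Fin d)))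
    (hA : MaximalMonotone A) (hB : MaximalMonotone B) (hC : MaximalMonotone C)
    (α θ : ℝ) (hα : 0 < α) (hθ : θ ≠ 0)
    (JA JB JC : EuclideanSpace ℝ (Fin d) → EuclideanSpace ℝ (Fin d))
    (hJA : IsResolvent α A JA) (hJB : IsResolvent α B JB) (hJC : IsResolvent α C JC)
    (x a b c : EuclideanSpace ℝ (Fin d))
    (ha : a ∈ A x) (hb : b ∈ B x) (hc : c ∈ C x) (habc : a + b + c = 0) :
    -- with z* = (x + αa, αb):
    JA (x + α • a) = x ∧
    JB (JA (x + α • a) + α • b) = x ∧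
    JC (JA (x + α • a) - (x + α • a) + JB (JA (x + α • a) + α • b) - α • b) = x ∧
    (x + α • a) + θ •
        (JC (JA (x + α • a) - (x + α • a) + JB (JA (x + α • a) + α • b) - α • b)
          - JA (x + α • a)) = x + α • a ∧
    (α • b) + θ •
        (JC (JA (x + α • a) - (x + α • a) + JB (JA (x + α • a) + α • b) - α • b)
          - JB (JA (x + α • a) + α • b)) = α • b := by
  obtain ⟨hAm, -⟩ := hA
  obtain ⟨hBm, -⟩ := hB
  obtain ⟨hCm, -⟩ := hC
  have h1 : JA (x + α • a) = x := resolvent_eq hα hAm hJA ha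
  have h2 : JB (JA (x + α • a) + α • b) = x := by
    rw [h1]; exact resolvent_eq hα hBm hJB hb
  have harg : JA (x + α • a) - (x + α • a) + JB (JA (x + α • a) + α • b) - α • b
      = x + α • c := by
    rw [h2, h1]
    have hcab : c = -a - b := by linear_combination (norm := abel) habc
    rw [hcab]; module
  have h3 : JC (JA (x + α • a) - (x + α • a) + JB (JA (x + α • a) + α • b) - α • b) = x := by
    rw [harg]; exact resolvent_eq hα hCm hJC hc
  refine ⟨h1, h2, h3, ?_, ?_⟩
  · rw [h3, h1]; simp
  · rw [h3, h2]; simp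
end

section
/- Let A, B, C be maximal monotone operators on ℝ^d. Define T: ℝ^{2d} → ℝ^{2d} by: for z = (z₁, z₂), set x₁ = J_A(z₁), x₂ = J_B(x₁ + z₂), x₃ = J_C(x₁ − z₁ + x₂ − z₂), and T(z) = (z₁ + x₃ − x₁, z₂ + x₃ − x₂). Then T is nonexpansive: ‖T(y) − T(z)‖ ≤ ‖y − z‖ for all y, z ∈ ℝ^{2d}. -/
open RealInnerProductSpace Pointwise Filter

lemma key_ineq {E : Type*} [NormedAddCommGroup E] [InnerProductSpace ℝ E]
    (v1 v2 x1 x2 x3 : E)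
    (h1 : 0 ≤ ⟪v1 - x1, x1⟫) (h2 : 0 ≤ ⟪x1 + v2 - x2, x2⟫)
    (h3 : 0 ≤ ⟪x1 - v1 + x2 - v2 - x3, x3⟫) :
    ‖v1 + (x3 - x1)‖ ^ 2 + ‖v2 + (x3 - x2)‖ ^ 2 ≤ ‖v1‖ ^ 2 + ‖v2‖ ^ 2 := by
  have h4 : (0:ℝ) ≤ ⟪x1 - x2, x1 - x2⟫ := real_inner_self_nonneg
  have c1 := real_inner_comm x1 v1
  have c2 := real_inner_comm x1 v2
  have c3 := real_inner_comm x2 v1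
  have c4 := real_inner_comm x2 v2
  have c5 := real_inner_comm x3 v1
  have c6 := real_inner_comm x3 v2
  have c7 := real_inner_comm x1 x2
  have c8 := real_inner_comm x1 x3
  have c9 := real_inner_comm x2 x3
  simp only [← real_inner_self_eq_norm_sq] at *
  simp only [inner_add_left, inner_add_right, inner_sub_left, inner_sub_right] at *
  linarith

/-- The minimal-lifting 3-operator splitting map (with `θ = 1`, `α = 1`). -/
noncomputable def T3 {d : ℕ} (JA JB JC : EuclideanSpace ℝ (Fin d) → EuclideanSpace ℝ (Fin d))
    (z : EuclideanSpace ℝ (Fin d) × EuclideanSpace ℝ (Fin d)) :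
    EuclideanSpace ℝ (Fin d) × EuclideanSpace ℝ (Fin d) :=
  let x₁ := JA z.1
  let x₂ := JB (x₁ + z.2)
  let x₃ := JC (x₁ - z.1 + x₂ - z.2)
  (z.1 + (x₃ - x₁), z.2 + (x₃ - x₂))

/-- The minimal-lifting splitting map is nonexpansive on `ℝ^{2d}` with the
Euclidean product norm `‖(u₁,u₂)‖² = ‖u₁‖² + ‖u₂‖²`. -/
theorem three_op_splitting_nonexpansive {d : ℕ}
    (A B C : EuclideanSpace ℝ (Fin d) → Set (EuclideanSpace ℝ (Fin d)))
    (hA : MaximalMonotone A) (hB : MaximalMonotone B) (hC : MaximalMonotone C)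
    (JA JB JC : EuclideanSpace ℝ (Fin d) → EuclideanSpace ℝ (Fin d))
    (hJA : IsResolvent 1 A JA) (hJB : IsResolvent 1 B JB) (hJC : IsResolvent 1 C JC) :
    ∀ y z : EuclideanSpace ℝ (Fin d) × EuclideanSpace ℝ (Fin d),
      ‖(T3 JA JB JC y).1 - (T3 JA JB JC z).1‖ ^ 2 +
        ‖(T3 JA JB JC y).2 - (T3 JA JB JC z).2‖ ^ 2 ≤
      ‖y.1 - z.1‖ ^ 2 + ‖y.2 - z.2‖ ^ 2 := by
  intro y z
  set a := JA y.1 with ha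
  set a' := JA z.1 with ha'
  set b := JB (a + y.2) with hb
  set b' := JB (a' + z.2) with hb'
  set c := JC (a - y.1 + b - y.2) with hc
  set c' := JC (a' - z.1 + b' - z.2) with hc'
  have hA' := hA.1 _ _ _ _ (hJA y.1) (hJA z.1)
  have hB' := hB.1 _ _ _ _ (hJB (a + y.2)) (hJB (a' + z.2))
  have hC' := hC.1 _ _ _ _ (hJC (a - y.1 + b - y.2)) (hJC (a' - z.1 + b' - z.2))
  simp only [inv_one, one_smul, ← ha, ← ha', ← hb, ← hb', ← hc, ← hc'] at hA' hB' hC'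
  have h1 : 0 ≤ ⟪(y.1 - z.1) - (a - a'), a - a'⟫ := by
    rw [show (y.1 - z.1) - (a - a') = (y.1 - a) - (z.1 - a') by abel]; exact hA'
  have h2 : 0 ≤ ⟪(a - a') + (y.2 - z.2) - (b - b'), b - b'⟫ := by
    rw [show (a - a') + (y.2 - z.2) - (b - b') = ((a + y.2) - b) - ((a' + z.2) - b') by abel]
    exact hB'
  have h3 : 0 ≤ ⟪(a - a') - (y.1 - z.1) + (b - b') - (y.2 - z.2) - (c - c'), c - c'⟫ := by
    rw [show (a - a') - (y.1 - z.1) + (b - b') - (y.2 - z.2) - (c - c')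
        = ((a - y.1 + b - y.2) - c) - ((a' - z.1 + b' - z.2) - c') by abel]
    exact hC'
  have key := key_ineq (y.1 - z.1) (y.2 - z.2) (a - a') (b - b') (c - c') h1 h2 h3
  simp only [T3, ← ha, ← ha', ← hb, ← hb', ← hc, ← hc']
  rw [show (y.1 + (c - a)) - (z.1 + (c' - a')) = (y.1 - z.1) + ((c - c') - (a - a')) by abel,
      show (y.2 + (c - b)) - (z.2 + (c' - b')) = (y.2 - z.2) + ((c - c') - (b - b')) by abel]
  exact key
end

section
/- Let F: ℝ^d → ℝ^d be firmly nonexpansive and M: ℝ^{2d} → ℝ^{2d} the linear map M(u₁,u₂) = (u₁+u₂, u₁+u₂). Let G: ℝ^{2d} → ℝ^{2d} be defined by G(u) = (F(u₁+u₂), F(u₁+u₂)) = (F,F)∘M(u). Then for any nonexpansive U: ℝ^{2d} → ℝ^{2d} satisfying the strengthened bound of the previous lemma, the map T = −U + G∘U satisfies ‖T(y) − T(z)‖² ≤ ‖U(y) − U(z)‖² for all y, z; in particular, if additionally ‖U(y)−U(z)‖ ≤ ‖y−z‖, then T is nonexpansive. -/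
open RealInnerProductSpace

lemma key_est {E : Type*} [NormedAddCommGroup E] [InnerProductSpace ℝ E]
    (u v w : E) (h : ‖w‖ ^ 2 ≤ ⟪u + v, w⟫) :
    ‖w - u‖ ^ 2 + ‖w - v‖ ^ 2 ≤ ‖u‖ ^ 2 + ‖v‖ ^ 2 := by
  have h1 := norm_sub_sq_real w u
  have h2 := norm_sub_sq_real w v
  rw [inner_add_left] at h
  nlinarith [sq_nonneg ‖w‖, real_inner_comm u w, real_inner_comm v w]

/-- If `F` is firmly nonexpansive, `G = (F,F)∘M` with `M(u₁,u₂) = (u₁+u₂, u₁+u₂)`, and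
`T = −U + G∘U`, then `‖T(y)−T(z)‖² ≤ ‖U(y)−U(z)‖²` (Euclidean product norm); in
particular if `U` is nonexpansive so is `T`. -/
theorem outer_estimate {d : ℕ}
    (F : EuclideanSpace ℝ (Fin d) → EuclideanSpace ℝ (Fin d))
    (hF : ∀ x y, ‖F x - F y‖ ^ 2 ≤ ⟪x - y, F x - F y⟫)
    (U : EuclideanSpace ℝ (Fin d) × EuclideanSpace ℝ (Fin d) →
         EuclideanSpace ℝ (Fin d) × EuclideanSpace ℝ (Fin d)) :
    (∀ y z,
      ‖(F ((U y).1 + (U y).2) - (U y).1) - (F ((U z).1 + (U z).2) - (U z).1)‖ ^ 2 +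
        ‖(F ((U y).1 + (U y).2) - (U y).2) - (F ((U z).1 + (U z).2) - (U z).2)‖ ^ 2 ≤
      ‖(U y).1 - (U z).1‖ ^ 2 + ‖(U y).2 - (U z).2‖ ^ 2) ∧
    ((∀ y z, ‖(U y).1 - (U z).1‖ ^ 2 + ‖(U y).2 - (U z).2‖ ^ 2 ≤
        ‖y.1 - z.1‖ ^ 2 + ‖y.2 - z.2‖ ^ 2) →
      ∀ y z,
        ‖(F ((U y).1 + (U y).2) - (U y).1) - (F ((U z).1 + (U z).2) - (U z).1)‖ ^ 2 +
          ‖(F ((U y).1 + (U y).2) - (U y).2) - (F ((U z).1 + (U z).2) - (U z).2)‖ ^ 2 ≤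
        ‖y.1 - z.1‖ ^ 2 + ‖y.2 - z.2‖ ^ 2) := by
  have main : ∀ y z,
      ‖(F ((U y).1 + (U y).2) - (U y).1) - (F ((U z).1 + (U z).2) - (U z).1)‖ ^ 2 +
        ‖(F ((U y).1 + (U y).2) - (U y).2) - (F ((U z).1 + (U z).2) - (U z).2)‖ ^ 2 ≤
      ‖(U y).1 - (U z).1‖ ^ 2 + ‖(U y).2 - (U z).2‖ ^ 2 := by
    intro y z
    set a := (U y).1; set b := (U y).2; set c := (U z).1; set e := (U z).2
    have h := hF (a + b) (c + e)
    have hsum : a + b - (c + e) = (a - c) + (b - e) := by abel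
    rw [hsum] at h
    have hk := key_est (a - c) (b - e) (F (a + b) - F (c + e)) h
    have e1 : F (a + b) - a - (F (c + e) - c) = F (a + b) - F (c + e) - (a - c) := by abel
    have e2 : F (a + b) - b - (F (c + e) - e) = F (a + b) - F (c + e) - (b - e) := by abel
    rw [e1, e2]
    exact hk
  exact ⟨main, fun hU y z => le_trans (main y z) (hU y z)⟩
end
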